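/- Let Γ be the cubical barycentric subdivision of the simplex 2^V on a d-element vertex set V, so that the faces of Γ_F correspond to pairs s ⊆ t of nonempty subsets of F. Then for each nonempty F ⊆ V with |F| = k, h^{(sc)}(Γ_F, x) = (2^k − (1+x)^k)/(1−x), and the local h-polynomial satisfies ℓ_P(Q, x) = Σ_{∅ ⊂ F ⊆ V} (−1)^{d−|F|} h^{(sc)}(Γ_F, x) = 1 + x + x^2 + ··· + x^{d−1}. -/
import Mathlib


open Finset
noncomputable section
open scoped Classical

variable {V : Type} [Fintype V] [DecidableEq V]

lemma sumA (u : Finset V) (a b : ℝ) :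
    ∑ s ∈ u.powerset, a ^ s.card * b ^ (u.card - s.card) = (a + b) ^ u.card := by
  have h := Finset.prod_add (fun _ : V => a) (fun _ : V => b) u
  simp only [Finset.prod_const] at h
  rw [h]
  apply Finset.sum_congr rfl
  intro s hs
  rw [Finset.card_sdiff_of_subset (Finset.mem_powerset.mp hs)]

/-- The short cubical h-polynomial of the restriction `Γ_F` of the cubical
barycentric subdivision `Γ` of a simplex `2^V` to a nonempty face `F`: the
nonempty faces of `Γ_F` are the pairs `(s,t)` with `∅ ≠ s ⊆ t ⊆ F`, of dimension
`|t∖s| = |t|-|s|`, and the ambient dimension of `Γ_F` is `|F|-1`. -/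
def hscCBS (F : Finset V) (x : ℝ) : ℝ :=
  ∑ p ∈ (F.powerset ×ˢ F.powerset).filter (fun p => p.1 ≠ ∅ ∧ p.1 ⊆ p.2),
    (2 * x) ^ (p.2.card - p.1.card) *
      (1 - x) ^ ((F.card - 1) - (p.2.card - p.1.card))

lemma hsc_eq (F : Finset V) (x : ℝ) :
    hscCBS F x = ∑ s ∈ F.powerset.filter (fun s => s ≠ ∅),
      (1 + x) ^ (F.card - s.card) * (1 - x) ^ (s.card - 1) := by
  rw [hscCBS, Finset.sum_filter, Finset.sum_product, Finset.sum_filter]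
  apply Finset.sum_congr rfl
  intro s hs
  by_cases hse : s ≠ ∅
  · rw [if_pos hse]
    have hsF : s ⊆ F := Finset.mem_powerset.mp hs
    have hs1 : 1 ≤ s.card := Finset.card_pos.mpr (Finset.nonempty_iff_ne_empty.mpr hse)
    have hsk : s.card ≤ F.card := Finset.card_le_card hsF
    rw [← Finset.sum_filter]
    have hfe : Finset.filter (fun a => s ≠ ∅ ∧ s ⊆ a) F.powerset
        = Finset.filter (fun t => s ⊆ t) F.powerset := by
      apply Finset.filter_congr; intro t ht; simp [hse]
    rw [hfe]
    have key : ∑ t ∈ F.powerset.filter (fun t => s ⊆ t),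
        (2 * x) ^ (t.card - s.card) * (1 - x) ^ ((F.card - 1) - (t.card - s.card))
        = ∑ D ∈ (F \ s).powerset,
        (2 * x) ^ D.card * (1 - x) ^ ((F.card - 1) - D.card) := by
      apply Finset.sum_nbij' (fun t => t \ s) (fun D => s ∪ D)
      · intro t ht
        simp only [Finset.mem_filter, Finset.mem_powerset] at ht ⊢
        exact Finset.sdiff_subset_sdiff ht.1 (Finset.Subset.refl s)
      · intro D hD
        simp only [Finset.mem_powerset] at hD
        simp only [Finset.mem_filter, Finset.mem_powerset]
        constructor
        · exact Finset.union_subset hsF (hD.trans (Finset.sdiff_subset))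
        · exact Finset.subset_union_left
      · intro t ht
        simp only [Finset.mem_filter] at ht
        exact Finset.union_sdiff_of_subset ht.2
      · intro D hD
        simp only [Finset.mem_powerset] at hD
        have : Disjoint s D := Finset.disjoint_of_subset_right hD Finset.disjoint_sdiff
        rw [Finset.union_sdiff_cancel_left this]
      · intro t ht
        simp only [Finset.mem_filter] at ht
        rw [Finset.card_sdiff_of_subset ht.2]
    rw [key]
    have hcard : (F \ s).card = F.card - s.card := Finset.card_sdiff_of_subset hsF
    have trans : ∀ D ∈ (F \ s).powerset,
        (2 * x) ^ D.card * (1 - x) ^ ((F.card - 1) - D.card)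
        = ((2 * x) ^ D.card * (1 - x) ^ ((F \ s).card - D.card)) * (1 - x) ^ (s.card - 1) := by
      intro D hD
      have hDc : D.card ≤ (F \ s).card := Finset.card_le_card (Finset.mem_powerset.mp hD)
      have : (F.card - 1) - D.card = ((F \ s).card - D.card) + (s.card - 1) := by
        rw [hcard] at hDc ⊢; omega
      rw [this, pow_add, mul_assoc]
    rw [Finset.sum_congr rfl trans, ← Finset.sum_mul, sumA]
    have : 2 * x + (1 - x) = 1 + x := by ring
    rw [this, hcard]
  · rw [if_neg hse]
    apply Finset.sum_eq_zero
    intro t ht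
    rw [if_neg (by simp [hse])]

/-- let `Γ` be the cubical barycentric subdivision of the simplex
`2^V` on a `d`-element vertex set `V`.  Then for each nonempty `F ⊆ V` with
`|F| = k` we have `h^{(sc)}(Γ_F, x) = (2^k − (1+x)^k)/(1−x)`, and the local
h-polynomial satisfies
`ℓ_P(Q, x) = Σ_{∅ ⊂ F ⊆ V} (−1)^{d−|F|} h^{(sc)}(Γ_F, x) = 1 + x + ··· + x^{d−1}`. -/
theorem cubical_barycentric_local_h (d : ℕ) (hV : Fintype.card V = d) :
    ∀ x : ℝ, x ≠ 1 →
      (∀ F : Finset V, F ≠ ∅ →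
        hscCBS F x = (2 ^ F.card - (1 + x) ^ F.card) / (1 - x))
      ∧ (∑ F ∈ (Finset.univ : Finset V).powerset.filter (fun F => F ≠ ∅),
            (-1:ℝ) ^ (d - F.card) * hscCBS F x)
          = ∑ i ∈ Finset.range d, x ^ i := by
  intro x hx
  have hone : (1 : ℝ) - x ≠ 0 := by
    intro h; apply hx; linarith
  have hmain : ∀ F : Finset V, F ≠ ∅ →
      hscCBS F x = (2 ^ F.card - (1 + x) ^ F.card) / (1 - x) := by
    intro F hF
    rw [eq_div_iff hone, hsc_eq, Finset.sum_mul]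
    have step : ∀ s ∈ F.powerset.filter (fun s => s ≠ ∅),
        (1 + x) ^ (F.card - s.card) * (1 - x) ^ (s.card - 1) * (1 - x)
        = (1 - x) ^ s.card * (1 + x) ^ (F.card - s.card) := by
      intro s hs
      simp only [Finset.mem_filter] at hs
      have hs1 : 1 ≤ s.card := Finset.card_pos.mpr (Finset.nonempty_iff_ne_empty.mpr hs.2)
      have : (1 - x) ^ (s.card - 1) * (1 - x) = (1 - x) ^ s.card := by
        rw [← pow_succ]; congr 1; omega
      rw [mul_assoc, this]; ring
    rw [Finset.sum_congr rfl step]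
    have : ∑ s ∈ F.powerset.filter (fun s => s ≠ ∅),
        (1 - x) ^ s.card * (1 + x) ^ (F.card - s.card)
        = (∑ s ∈ F.powerset, (1 - x) ^ s.card * (1 + x) ^ (F.card - s.card))
          - (1 + x) ^ F.card := by
      rw [Finset.filter_ne', eq_sub_iff_add_eq]
      have h0 : ((1:ℝ) - x) ^ (∅ : Finset V).card * (1 + x) ^ (F.card - (∅ : Finset V).card)
          = (1 + x) ^ F.card := by simp
      rw [← h0]
      exact Finset.sum_erase_add _ _ (Finset.empty_mem_powerset F)
    rw [this, sumA]
    norm_num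
  refine ⟨hmain, ?_⟩
  have hd : (Finset.univ : Finset V).card = d := by rw [Finset.card_univ, hV]
  have key : ∀ F ∈ (Finset.univ : Finset V).powerset,
      (if F ≠ ∅ then (-1:ℝ) ^ (d - F.card) * hscCBS F x else 0)
      = ((-1:ℝ) ^ (d - F.card) * (2 ^ F.card - (1 + x) ^ F.card)) / (1 - x) := by
    intro F _
    by_cases hF : F ≠ ∅
    · rw [if_pos hF, hmain F hF]; ring
    · rw [if_neg hF]
      rw [not_ne_iff.mp hF]
      simp
  rw [Finset.sum_filter, Finset.sum_congr rfl key]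
  have e2 : ∑ F ∈ (Finset.univ : Finset V).powerset,
      ((-1:ℝ) ^ (d - F.card) * (2 ^ F.card - (1 + x) ^ F.card)) / (1 - x)
      = ((∑ F ∈ (Finset.univ : Finset V).powerset, (2:ℝ) ^ F.card * (-1) ^ (d - F.card))
        - (∑ F ∈ (Finset.univ : Finset V).powerset, (1 + x) ^ F.card * (-1) ^ (d - F.card)))
        / (1 - x) := by
    rw [← Finset.sum_sub_distrib, Finset.sum_div]
    apply Finset.sum_congr rfl
    intro F _
    ring
  rw [e2]
  have h2 : ∑ F ∈ (Finset.univ : Finset V).powerset, (2:ℝ) ^ F.card * (-1) ^ (d - F.card) = 1 := by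
    rw [← hd, sumA]; norm_num
  have h3 : ∑ F ∈ (Finset.univ : Finset V).powerset,
      ((1:ℝ) + x) ^ F.card * (-1) ^ (d - F.card) = x ^ d := by
    rw [← hd, sumA]; norm_num
  rw [h2, h3, geom_sum_eq hx]
  rw [div_eq_div_iff hone (by intro h; apply hx; linarith)]
  ring
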